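/- arXiv:2209.13688 — 2 statements merged into one kernel-verified Lean document; each statement's English description precedes it below -/
import Mathlib

section
/- Consider the principal-agent model with a risk-neutral agent under limited liability. If an action a ∈ {1,...,n} is implementable (i.e., w_a ≥ max{w_1, 0}), then an action-transfer pair (a,s) is implementable if and only if s lies in the interval [c_a, r_a − max{w_1, 0}]. -/
/-!
Necessity: individual rationality against the null action gives `c a ≤ s`, and the flat
contract paying `c 1` on every signal secures the principal `max (w 1) 0` under any information
structure, so an optimal contract leaves her at least that much.

Sufficiency: let `a` emit signal `0` surely and every other action emit it with probability
`α = 1 - (c a - c 1) / s`, and pay `s` on signal `0` only. Every other action then receives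
exactly `c a - c 1` less than `a`, so only actions of cost `c 1` compete with `a`. A contract
inducing `a` must pay at least `s` on signal `0` to beat action `1`, and one inducing another
action gives the principal at most `max (w 1) 0`.
-/

open Finset

/-- Expected transfer at action `a` (zero for the default action `0`). -/
noncomputable def expT {n k : ℕ} (I : Fin (n + 1) → Fin k → ℝ) (t : Fin k → ℝ)
    (a : Fin (n + 1)) : ℝ :=
  if a = 0 then 0 else ∑ j, I a j * t j

/-- Risk-neutral agent's utility at action `a`. -/
noncomputable def uA {n k : ℕ} (c : Fin (n + 1) → ℝ) (I : Fin (n + 1) → Fin k → ℝ)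
    (t : Fin k → ℝ) (a : Fin (n + 1)) : ℝ :=
  expT I t a - c a

/-- Principal's utility at action `a`. -/
noncomputable def uP {n k : ℕ} (r : Fin (n + 1) → ℝ) (I : Fin (n + 1) → Fin k → ℝ)
    (t : Fin k → ℝ) (a : Fin (n + 1)) : ℝ :=
  r a - expT I t a

/-- `I` is an information structure: each non-default row is a distribution over signals. -/
def Stochastic {n k : ℕ} (I : Fin (n + 1) → Fin k → ℝ) : Prop :=
  ∀ a : Fin (n + 1), a ≠ 0 → (∀ j, 0 ≤ I a j) ∧ ∑ j, I a j = 1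

/-- `a` is an equilibrium action for the contract `t`: it maximizes the agent's utility
and, among the agent's optimal actions, maximizes the principal's utility
(ties are broken in the principal's favor). -/
def IsEquilibrium {n k : ℕ} (r c : Fin (n + 1) → ℝ) (I : Fin (n + 1) → Fin k → ℝ)
    (t : Fin k → ℝ) (a : Fin (n + 1)) : Prop :=
  (∀ b, uA c I t b ≤ uA c I t a) ∧
    ∀ b, uA c I t b = uA c I t a → uP r I t b ≤ uP r I t a

/-- `t` is an optimal limited-liability contract for `I`, with equilibrium action `a`:
its equilibrium principal's utility is at least that of any other limited-liability
contract. -/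
def OptimalAt {n k : ℕ} (r c : Fin (n + 1) → ℝ) (I : Fin (n + 1) → Fin k → ℝ)
    (t : Fin k → ℝ) (a : Fin (n + 1)) : Prop :=
  (∀ j, 0 ≤ t j) ∧ IsEquilibrium r c I t a ∧
    ∀ (t' : Fin k → ℝ) (a' : Fin (n + 1)), (∀ j, 0 ≤ t' j) →
      IsEquilibrium r c I t' a' → uP r I t' a' ≤ uP r I t a

/-- The utility profile `(x, y)` is implementable by some information structure
together with an optimal contract for it. -/
def ImplementsProfile {n : ℕ} (r c : Fin (n + 1) → ℝ) (x y : ℝ) : Prop :=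
  ∃ (k : ℕ) (_ : 0 < k) (I : Fin (n + 1) → Fin k → ℝ) (t : Fin k → ℝ) (a : Fin (n + 1)),
    Stochastic I ∧ OptimalAt r c I t a ∧ uP r I t a = x ∧ uA c I t a = y

/-- The action `a` is implementable. -/
def ImplementsAction {n : ℕ} (r c : Fin (n + 1) → ℝ) (a : Fin (n + 1)) : Prop :=
  ∃ (k : ℕ) (_ : 0 < k) (I : Fin (n + 1) → Fin k → ℝ) (t : Fin k → ℝ),
    Stochastic I ∧ OptimalAt r c I t a

/-- The action-transfer pair `(a, s)` is implementable. -/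
def ImplementsPair {n : ℕ} (r c : Fin (n + 1) → ℝ) (a : Fin (n + 1)) (s : ℝ) : Prop :=
  ∃ (k : ℕ) (_ : 0 < k) (I : Fin (n + 1) → Fin k → ℝ) (t : Fin k → ℝ),
    Stochastic I ∧ OptimalAt r c I t a ∧ expT I t a = s

section General

variable {n k : ℕ} {r c : Fin (n + 1) → ℝ} {I : Fin (n + 1) → Fin k → ℝ} {t : Fin k → ℝ}

theorem expT_zero : expT I t 0 = 0 := if_pos rfl

theorem uA_add_uP (b : Fin (n + 1)) : uA c I t b + uP r I t b = r b - c b := by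
  unfold uA uP
  ring

theorem expT_const (hI : Stochastic I) (x : ℝ) {b : Fin (n + 1)} (hb : b ≠ 0) :
    expT I (fun _ => x) b = x := by
  rw [expT, if_neg hb, ← Finset.sum_mul, (hI b hb).2, one_mul]

theorem isEquilibrium_iff_welfare {a : Fin (n + 1)} :
    IsEquilibrium r c I t a ↔ (∀ b, uA c I t b ≤ uA c I t a) ∧
      ∀ b, uA c I t b = uA c I t a → r b - c b ≤ r a - c a := by
  refine and_congr_right fun _ => forall_congr' fun b => imp_congr_right fun hab => ?_
  rw [← uA_add_uP (I := I) (t := t) b, ← uA_add_uP (I := I) (t := t) a, hab, add_le_add_iff_left]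

theorem IsEquilibrium.cost_le_expT {a : Fin (n + 1)} (h : IsEquilibrium r c I t a)
    (hc0 : c 0 = 0) : c a ≤ expT I t a := by
  have := h.1 0
  simp only [uA, expT_zero, hc0] at this
  linarith

theorem IsEquilibrium.uP_le_welfare {a : Fin (n + 1)} (h : IsEquilibrium r c I t a)
    (hc0 : c 0 = 0) : uP r I t a ≤ r a - c a := by
  have := h.cost_le_expT hc0
  unfold uP
  linarith

theorem OptimalAt.max_welfare_one_le_uP {a : Fin (n + 1)} (hI : Stochastic I)
    (ht : OptimalAt r c I t a) (hr0 : r 0 = 0) (hc0 : c 0 = 0) (h1 : (1 : Fin (n + 1)) ≠ 0)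
    (hc1 : 0 ≤ c 1) (hc1_min : ∀ b : Fin (n + 1), b ≠ 0 → c 1 ≤ c b)
    (hr1_max : ∀ b : Fin (n + 1), b ≠ 0 → c b = c 1 → r b ≤ r 1) :
    max (r 1 - c 1) 0 ≤ uP r I t a := by
  set flat : Fin k → ℝ := fun _ => c 1
  have hflat : ∀ b, uA c I flat b ≤ 0 ∧
      (uA c I flat b = 0 → r b - c b ≤ max (r 1 - c 1) 0) := by
    intro b
    by_cases hb : b = 0
    · subst hb
      simp [uA, expT_zero, hr0, hc0]
    · simp only [uA, flat, expT_const hI _ hb]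
      refine ⟨by linarith [hc1_min b hb], fun h => ?_⟩
      linarith [hr1_max b hb (by linarith), le_max_left (r 1 - c 1) 0]
  obtain ⟨a₀, hu₀, hw₀⟩ : ∃ a₀, uA c I flat a₀ = 0 ∧ r a₀ - c a₀ = max (r 1 - c 1) 0 := by
    rcases le_total 0 (r 1 - c 1) with h | h
    · exact ⟨1, by simp [uA, flat, expT_const hI _ h1], (max_eq_left h).symm⟩
    · exact ⟨0, by simp [uA, expT_zero, hc0], by simp [hr0, hc0, max_eq_right h]⟩
  have hE : IsEquilibrium r c I flat a₀ := isEquilibrium_iff_welfare.2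
    ⟨fun b => hu₀ ▸ (hflat b).1, fun b hb => hw₀ ▸ (hflat b).2 (hb.trans hu₀)⟩
  calc max (r 1 - c 1) 0 = uP r I flat a₀ := by
        linarith [uA_add_uP (r := r) (c := c) (I := I) (t := flat) a₀]
    _ ≤ uP r I t a := ht.2.2 flat a₀ (fun _ => hc1) hE

end General

section Sufficiency

variable {n : ℕ} {r c : Fin (n + 1) → ℝ}

def twoSignal (a : Fin (n + 1)) (α : ℝ) : Fin (n + 1) → Fin 2 → ℝ :=
  fun b => if b = a then ![1, 0] else ![α, 1 - α]

theorem stochastic_twoSignal (a : Fin (n + 1)) {α : ℝ} (hα0 : 0 ≤ α) (hα1 : α ≤ 1) :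
    Stochastic (twoSignal a α) := by
  intro b _
  unfold twoSignal
  split_ifs
  · simp [Fin.forall_fin_two]
  · simp [Fin.forall_fin_two, hα0, hα1]

theorem expT_twoSignal (a : Fin (n + 1)) (α : ℝ) (t : Fin 2 → ℝ) {b : Fin (n + 1)}
    (hb : b ≠ 0) :
    expT (twoSignal a α) t b = if b = a then t 0 else α * t 0 + (1 - α) * t 1 := by
  rw [expT, if_neg hb, Fin.sum_univ_two]
  unfold twoSignal
  split_ifs <;> simp

variable {a : Fin (n + 1)} {α s : ℝ}

theorem isEquilibrium_twoSignal_bonus (ha : a ≠ 0) (hr0 : r 0 = 0) (hc0 : c 0 = 0)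
    (hc1_min : ∀ b : Fin (n + 1), b ≠ 0 → c 1 ≤ c b)
    (hr1_max : ∀ b : Fin (n + 1), b ≠ 0 → c b = c 1 → r b ≤ r 1)
    (hαs : (1 - α) * s = c a - c 1) (hcs : c a ≤ s) (hs : s ≤ r a - max (r 1 - c 1) 0) :
    IsEquilibrium r c (twoSignal a α) ![s, 0] a := by
  have hua : uA c (twoSignal a α) ![s, 0] a = s - c a := by
    simp [uA, expT_twoSignal a α _ ha]
  have hub : ∀ b, b ≠ 0 → b ≠ a → uA c (twoSignal a α) ![s, 0] b = s - c a + c 1 - c b := by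
    intro b hb0 hba
    simp only [uA, expT_twoSignal a α _ hb0, if_neg hba, Matrix.cons_val_zero,
      Matrix.cons_val_one, mul_zero, add_zero]
    linarith
  have hmax := le_max_left (r 1 - c 1) 0
  have hmax0 := le_max_right (r 1 - c 1) 0
  refine isEquilibrium_iff_welfare.2 ⟨fun b => ?_, fun b hb => ?_⟩
  · rw [hua]
    by_cases hb0 : b = 0
    · simp [hb0, uA, expT_zero, hc0, hcs]
    by_cases hba : b = a
    · rw [hba, hua]
    · rw [hub b hb0 hba]
      linarith [hc1_min b hb0]
  · by_cases hb0 : b = 0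
    · subst hb0
      rw [hr0, hc0]
      linarith
    by_cases hba : b = a
    · rw [hba]
    · rw [hub b hb0 hba, hua] at hb
      linarith [hr1_max b hb0 (by linarith)]

theorem bonus_le_of_isEquilibrium_twoSignal (ha : a ≠ 0) (h1 : (1 : Fin (n + 1)) ≠ 0)
    (hc0 : c 0 = 0) (hα1 : α ≤ 1) (hαs : (1 - α) * s = c a - c 1)
    (hs_eq : c a = c 1 → s ≤ c a) {t : Fin 2 → ℝ} (ht : ∀ j, 0 ≤ t j)
    (hE : IsEquilibrium r c (twoSignal a α) t a) : s ≤ t 0 := by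
  have hIR := hE.cost_le_expT hc0
  rw [expT_twoSignal a α t ha, if_pos rfl] at hIR
  rcases eq_or_ne (c a) (c 1) with hca | hca
  · exact (hs_eq hca).trans hIR
  have h1a : (1 : Fin (n + 1)) ≠ a := fun h => hca (by rw [h])
  have hIC := hE.1 1
  simp only [uA, expT_twoSignal a α t ha, expT_twoSignal a α t h1, if_neg h1a,
    if_true] at hIC
  have hpos : 0 < 1 - α := by
    refine lt_of_le_of_ne (by linarith) fun h => hca ?_
    rw [← h, zero_mul] at hαs
    linarith
  refine le_of_mul_le_mul_left ?_ hpos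
  nlinarith [mul_nonneg hpos.le (ht 1)]

theorem cost_eq_of_isEquilibrium_twoSignal (h1 : (1 : Fin (n + 1)) ≠ 0)
    (hc1_min : ∀ b : Fin (n + 1), b ≠ 0 → c 1 ≤ c b) (hα : c a = c 1 → α = 1)
    {t : Fin 2 → ℝ} {a' : Fin (n + 1)} (ha'0 : a' ≠ 0) (ha'a : a' ≠ a)
    (hE : IsEquilibrium r c (twoSignal a α) t a') : c a' = c 1 := by
  have htransfer : expT (twoSignal a α) t 1 = expT (twoSignal a α) t a' := by
    rw [expT_twoSignal a α t h1, expT_twoSignal a α t ha'0, if_neg ha'a]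
    split_ifs with h1a
    · rw [hα (by rw [h1a])]
      ring
    · rfl
  have hIC := hE.1 1
  simp only [uA, htransfer] at hIC
  exact le_antisymm (by linarith) (hc1_min a' ha'0)

theorem optimalAt_twoSignal_bonus (ha : a ≠ 0) (h1 : (1 : Fin (n + 1)) ≠ 0) (hr0 : r 0 = 0)
    (hc0 : c 0 = 0) (hc1_min : ∀ b : Fin (n + 1), b ≠ 0 → c 1 ≤ c b)
    (hr1_max : ∀ b : Fin (n + 1), b ≠ 0 → c b = c 1 → r b ≤ r 1) (hα1 : α ≤ 1)
    (hs0 : 0 < s) (hαs : (1 - α) * s = c a - c 1) (hcs : c a ≤ s)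
    (hs : s ≤ r a - max (r 1 - c 1) 0) :
    OptimalAt r c (twoSignal a α) ![s, 0] a := by
  have hmax := le_max_left (r 1 - c 1) 0
  have hmax0 := le_max_right (r 1 - c 1) 0
  have hα : c a = c 1 → α = 1 := fun h => by
    rw [h, sub_self, mul_eq_zero] at hαs
    exact (sub_eq_zero.1 (hαs.resolve_right hs0.ne')).symm
  have hs_eq : c a = c 1 → s ≤ c a := fun h => by
    linarith [hr1_max a ha h]
  have hval : uP r (twoSignal a α) ![s, 0] a = r a - s := by
    simp [uP, expT_twoSignal a α _ ha]
  refine ⟨by simp [Fin.forall_fin_two, hs0.le],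
    isEquilibrium_twoSignal_bonus ha hr0 hc0 hc1_min hr1_max hαs hcs hs, fun t a' ht hE => ?_⟩
  rw [hval]
  by_cases ha'0 : a' = 0
  · rw [ha'0, uP, expT_zero, hr0]
    linarith
  by_cases ha'a : a' = a
  · subst ha'a
    rw [uP, expT_twoSignal a' α t ha, if_pos rfl]
    linarith [bonus_le_of_isEquilibrium_twoSignal ha h1 hc0 hα1 hαs hs_eq ht hE]
  · have hc := cost_eq_of_isEquilibrium_twoSignal h1 hc1_min hα ha'0 ha'a hE
    linarith [hE.uP_le_welfare hc0, hr1_max a' ha'0 hc]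

theorem implementsPair_of_le_of_le (ha : a ≠ 0) (h1 : (1 : Fin (n + 1)) ≠ 0) (hr0 : r 0 = 0)
    (hc0 : c 0 = 0) (hc1 : 0 ≤ c 1) (hca : 0 < c a)
    (hc1_min : ∀ b : Fin (n + 1), b ≠ 0 → c 1 ≤ c b)
    (hr1_max : ∀ b : Fin (n + 1), b ≠ 0 → c b = c 1 → r b ≤ r 1) (hcs : c a ≤ s)
    (hs : s ≤ r a - max (r 1 - c 1) 0) : ImplementsPair r c a s := by
  have hs0 : 0 < s := hca.trans_le hcs
  have hgap : 0 ≤ (c a - c 1) / s := div_nonneg (by linarith [hc1_min a ha]) hs0.le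
  have hgap' : (c a - c 1) / s ≤ 1 := (div_le_one hs0).2 (by linarith)
  set α := 1 - (c a - c 1) / s
  have hαs : (1 - α) * s = c a - c 1 := by
    simp only [α, sub_sub_cancel]
    field_simp
  refine ⟨2, two_pos, twoSignal a α, ![s, 0], stochastic_twoSignal a (by linarith) (by linarith),
    optimalAt_twoSignal_bonus ha h1 hr0 hc0 hc1_min hr1_max (by linarith) hs0 hαs hcs hs, ?_⟩
  simp [expT_twoSignal a α _ ha]

end Sufficiency

theorem implementable_pair_iff_risk_neutral_general
    (n : ℕ) (hn : 1 ≤ n) (r c : Fin (n + 1) → ℝ)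
    (hr0 : r 0 = 0) (hc0 : c 0 = 0)
    (hc_pos : ∀ a : Fin (n + 1), a ≠ 0 → 0 < c a)
    (hc1_min : ∀ a : Fin (n + 1), a ≠ 0 → c 1 ≤ c a)
    (hr1_max : ∀ a : Fin (n + 1), a ≠ 0 → c a = c 1 → r a ≤ r 1)
    (a : Fin (n + 1)) (ha : a ≠ 0) (s : ℝ) :
    ImplementsPair r c a s ↔ c a ≤ s ∧ s ≤ r a - max (r 1 - c 1) 0 := by
  have h1 : (1 : Fin (n + 1)) ≠ 0 := by
    have : NeZero n := ⟨by omega⟩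
    exact one_ne_zero
  constructor
  · rintro ⟨k, -, I, t, hI, ht, rfl⟩
    have hbound := ht.max_welfare_one_le_uP hI hr0 hc0 h1 (hc_pos 1 h1).le hc1_min hr1_max
    exact ⟨ht.2.1.cost_le_expT hc0, by rw [uP] at hbound; linarith⟩
  · rintro ⟨hcs, hs⟩
    exact implementsPair_of_le_of_le ha h1 hr0 hc0 (hc_pos 1 h1).le (hc_pos a ha) hc1_min
      hr1_max hcs hs

/-- In the principal-agent model with a risk-neutral agent under limited
liability, if an action $a \in \{1,\dots,n\}$ is implementable (i.e.
$w_a \ge \max\{w_1,0\}$), then the action-transfer pair $(a,s)$ is implementable if and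
only if $s \in [c_a, r_a - \max\{w_1, 0\}]$. -/
theorem implementable_pair_iff_risk_neutral
    (n : ℕ) (hn : 1 ≤ n) (r c : Fin (n + 1) → ℝ)
    (hr0 : r 0 = 0) (hc0 : c 0 = 0)
    (hr_nonneg : ∀ a, 0 ≤ r a)
    (hc_pos : ∀ a : Fin (n + 1), a ≠ 0 → 0 < c a)
    (hc1_min : ∀ a : Fin (n + 1), a ≠ 0 → c 1 ≤ c a)
    (hr1_max : ∀ a : Fin (n + 1), a ≠ 0 → c a = c 1 → r a ≤ r 1)
    (a : Fin (n + 1)) (ha : a ≠ 0)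
    (ha_impl : max (r 1 - c 1) 0 ≤ r a - c a) (s : ℝ) :
    ImplementsPair r c a s ↔ c a ≤ s ∧ s ≤ r a - max (r 1 - c 1) 0 :=
  implementable_pair_iff_risk_neutral_general n hn r c hr0 hc0 hc_pos hc1_min hr1_max a ha s
end

section
/- Consider the principal-agent model with a risk-averse agent under limited liability, with von Neumann-Morgenstern function v. A utility profile (x,y) ∈ F is implementable if and only if x ≥ max{r_1 − v⁻¹(c_1), 0} and y ≥ 0. -/
open Finset Filter

/-- Risk-averse agent's utility at action `a`, with von Neumann-Morgenstern function
`v`: the expected `v`-value of the transfer minus the cost of the action. -/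
noncomputable def uAV {n k : ℕ} (v : ℝ → ℝ) (c : Fin (n + 1) → ℝ)
    (I : Fin (n + 1) → Fin k → ℝ) (t : Fin k → ℝ) (a : Fin (n + 1)) : ℝ :=
  (if a = 0 then 0 else ∑ j, I a j * v (t j)) - c a

/-- `a` is an equilibrium action for the contract `t` (risk-averse agent): it maximizes
the agent's utility and, among the agent's optimal actions, maximizes the principal's
utility (ties are broken in the principal's favor). -/
def IsEquilibriumV {n k : ℕ} (v : ℝ → ℝ) (r c : Fin (n + 1) → ℝ)
    (I : Fin (n + 1) → Fin k → ℝ) (t : Fin k → ℝ) (a : Fin (n + 1)) : Prop :=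
  (∀ b, uAV v c I t b ≤ uAV v c I t a) ∧
    ∀ b, uAV v c I t b = uAV v c I t a → uP r I t b ≤ uP r I t a

/-- `t` is an optimal limited-liability contract for `I` (risk-averse agent), with
equilibrium action `a`. -/
def OptimalAtV {n k : ℕ} (v : ℝ → ℝ) (r c : Fin (n + 1) → ℝ)
    (I : Fin (n + 1) → Fin k → ℝ) (t : Fin k → ℝ) (a : Fin (n + 1)) : Prop :=
  (∀ j, 0 ≤ t j) ∧ IsEquilibriumV v r c I t a ∧
    ∀ (t' : Fin k → ℝ) (a' : Fin (n + 1)), (∀ j, 0 ≤ t' j) →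
      IsEquilibriumV v r c I t' a' → uP r I t' a' ≤ uP r I t a

/-- The utility profile `(x, y)` is implementable (risk-averse agent). -/
def ImplementsProfileV {n : ℕ} (v : ℝ → ℝ) (r c : Fin (n + 1) → ℝ) (x y : ℝ) : Prop :=
  ∃ (k : ℕ) (_ : 0 < k) (I : Fin (n + 1) → Fin k → ℝ) (t : Fin k → ℝ) (a : Fin (n + 1)),
    Stochastic I ∧ OptimalAtV v r c I t a ∧ uP r I t a = x ∧ uAV v c I t a = y

/-- The action `a` is implementable (risk-averse agent). -/
def ImplementsActionV {n : ℕ} (v : ℝ → ℝ) (r c : Fin (n + 1) → ℝ) (a : Fin (n + 1)) :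
    Prop :=
  ∃ (k : ℕ) (_ : 0 < k) (I : Fin (n + 1) → Fin k → ℝ) (t : Fin k → ℝ),
    Stochastic I ∧ OptimalAtV v r c I t a

/-- The action-transfer pair `(a, s)` is implementable (risk-averse agent). -/
def ImplementsPairV {n : ℕ} (v : ℝ → ℝ) (r c : Fin (n + 1) → ℝ) (a : Fin (n + 1))
    (s : ℝ) : Prop :=
  ∃ (k : ℕ) (_ : 0 < k) (I : Fin (n + 1) → Fin k → ℝ) (t : Fin k → ℝ),
    Stochastic I ∧ OptimalAtV v r c I t a ∧ expT I t a = s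

/-!
Necessity: the agent can always stay out, so `y ≥ 0`; the principal can always offer nothing
(earning `0`) or the flat wage `v⁻¹ (c 1)`, under which action `1` is optimal for the agent.

Sufficiency for `(x, y) ∈ F_i`: put `T = r i - x`. Sublinearity of `v` yields a bonus `s ≥ T`
paid with probability `q = T / s` such that `q * v s = c i + y`. With two signals, action `i`
triggers the bonus with probability `q` and every other action with probability `β * q`,
`β = (c 1 + y) / (c i + y)`, so the agent gets `y` from `i` and `c 1 + y - c a ≤ y` elsewhere.
No contract does better for the principal: an action of cost `c 1` needs an expected transfer of
at least `v⁻¹ (c 1)` (Jensen), which exceeds `r 1 - x` because `v (β T) ≥ β v T ≥ c 1`; and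
when `c 1 < c i`, incentive compatibility against action `1` forces a bonus of at least `s`.
-/

section

variable {n k : ℕ} {v vinv : ℝ → ℝ} {r c : Fin (n + 1) → ℝ} {I : Fin (n + 1) → Fin k → ℝ}
  {t : Fin k → ℝ} {a : Fin (n + 1)}

lemma ConcaveOn.mul_map_le_map_mul (hv_conc : ConcaveOn ℝ (Set.Ici 0) v)
    (hv0 : v 0 = 0) {β z : ℝ} (hβ0 : 0 ≤ β) (hβ1 : β ≤ 1) (hz : 0 ≤ z) :
    β * v z ≤ v (β * z) := by
  simpa [hv0] using hv_conc.2 hz (Set.mem_Ici.2 le_rfl) hβ0 (sub_nonneg.2 hβ1) (add_sub_cancel β 1)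

lemma exists_ge_map_eq_mul {T m : ℝ} (hcont : ContinuousOn v (Set.Ici T))
    (hlim : Tendsto (fun z => v z / z) atTop (nhds 0)) (hm : 0 < m) (hT : m * T ≤ v T) :
    ∃ s, T ≤ s ∧ v s = m * s := by
  obtain ⟨M, hTM, hM0, hMm⟩ : ∃ M, T ≤ M ∧ 0 < M ∧ v M / M < m :=
    ((eventually_ge_atTop T).and
      ((eventually_gt_atTop 0).and (hlim.eventually_lt_const hm))).exists
  have hM : v M - m * M ≤ 0 := by
    rw [div_lt_iff₀ hM0] at hMm
    linarith
  obtain ⟨s, hs, hs0⟩ := intermediate_value_Icc' hTM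
    ((hcont.mono Set.Icc_subset_Ici_self).sub (continuousOn_const.mul continuousOn_id))
    ⟨hM, sub_nonneg.2 hT⟩
  exact ⟨s, hs.1, sub_eq_zero.1 hs0⟩

/-- Sublinear growth of `v` lets any point `(T, K)` with `0 < K ≤ v T` be written as
`q • (s, v s)`, `0 < q ≤ 1`: a lottery paying `s` with probability `q` has mean `T` and
expected utility exactly `K`. -/
lemma exists_lottery (hv_conc : ConcaveOn ℝ (Set.Ici 0) v)
    (hv_lim : Tendsto (fun z => v z / z) atTop (nhds 0)) {T K : ℝ} (hT : 0 < T) (hK : 0 < K)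
    (hKT : K ≤ v T) : ∃ q s, 0 < q ∧ q ≤ 1 ∧ 0 ≤ s ∧ q * s = T ∧ q * v s = K := by
  have hcont : ContinuousOn v (Set.Ici T) :=
    hv_conc.continuousOn_interior.mono (by rw [interior_Ici]; exact Set.Ici_subset_Ioi.2 hT)
  obtain ⟨s, hTs, hs⟩ :=
    exists_ge_map_eq_mul hcont hv_lim (div_pos hK hT) (by rwa [div_mul_cancel₀ _ hT.ne'])
  have hs0 : 0 < s := hT.trans_le hTs
  refine ⟨T / s, s, div_pos hT hs0, (div_le_one hs0).2 hTs, hs0.le,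
    div_mul_cancel₀ _ hs0.ne', ?_⟩
  rw [hs]
  field_simp

lemma vinv_le_of_le_map (hv_mono : StrictMonoOn v (Set.Ici 0))
    (hvinv_nonneg : ∀ u : ℝ, 0 ≤ u → 0 ≤ vinv u) (hvinv : ∀ u : ℝ, 0 ≤ u → v (vinv u) = u)
    {u z : ℝ} (hu : 0 ≤ u) (hz : 0 ≤ z) (h : u ≤ v z) : vinv u ≤ z :=
  (hv_mono.le_iff_le (hvinv_nonneg u hu) hz).1 ((hvinv u hu).symm ▸ h)


lemma expT_of_ne_zero (ha : a ≠ 0) : expT I t a = ∑ j, I a j * t j := if_neg ha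

lemma uAV_of_ne_zero (ha : a ≠ 0) : uAV v c I t a = ∑ j, I a j * v (t j) - c a := by
  rw [uAV, if_neg ha]

lemma uAV_zero (hc0 : c 0 = 0) : uAV v c I t 0 = 0 := by simp [uAV, hc0]

lemma uP_zero (hr0 : r 0 = 0) : uP r I t 0 = 0 := by simp [uP, expT, hr0]

lemma Stochastic.expT_nonneg (hI : Stochastic I) (ht : ∀ j, 0 ≤ t j) : 0 ≤ expT I t a := by
  unfold expT
  split_ifs with ha
  · exact le_rfl
  · exact sum_nonneg fun j _ => mul_nonneg ((hI a ha).1 j) (ht j)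

lemma Stochastic.uAV_const (hI : Stochastic I) (w : ℝ) (b : Fin (n + 1)) :
    uAV v c I (fun _ => w) b = (if b = 0 then 0 else v w) - c b := by
  unfold uAV
  split_ifs with hb
  · rfl
  · rw [← sum_mul, (hI b hb).2, one_mul]

lemma Stochastic.uP_const (hI : Stochastic I) (w : ℝ) {b : Fin (n + 1)} (hb : b ≠ 0) :
    uP r I (fun _ => w) b = r b - w := by
  rw [uP, expT_of_ne_zero hb, ← sum_mul, (hI b hb).2, one_mul]

lemma Stochastic.sum_mul_map_le_map_expT (hv_conc : ConcaveOn ℝ (Set.Ici 0) v)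
    (hI : Stochastic I) (ht : ∀ j, 0 ≤ t j) (ha : a ≠ 0) :
    ∑ j, I a j * v (t j) ≤ v (expT I t a) := by
  rw [expT_of_ne_zero ha]
  simpa only [smul_eq_mul] using
    hv_conc.le_map_sum (fun j _ => (hI a ha).1 j) (hI a ha).2 fun j _ => ht j

lemma exists_isEquilibriumV_uP_le (b : Fin (n + 1))
    (hb : ∀ b', uAV v c I t b' ≤ uAV v c I t b) :
    ∃ a, IsEquilibriumV v r c I t a ∧ uP r I t b ≤ uP r I t a := by
  obtain ⟨a, ha, hmax⟩ := (univ.filter fun a => uAV v c I t a = uAV v c I t b).exists_max_image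
    (uP r I t) ⟨b, by simp⟩
  rw [mem_filter] at ha
  exact ⟨a, ⟨fun b' => ha.2 ▸ hb b', fun b' hb' => hmax b' (by simp [hb', ha.2])⟩,
    hmax b (by simp)⟩

lemma isEquilibriumV_zero_contract (hc0 : c 0 = 0) (hc_pos : ∀ a : Fin (n + 1), a ≠ 0 → 0 < c a)
    (hv0 : v 0 = 0) (hI : Stochastic I) : IsEquilibriumV v r c I (fun _ => 0) 0 := by
  have huA : ∀ b, uAV v c I (fun _ => 0) b = -c b := fun b => by
    rw [hI.uAV_const]; split_ifs <;> simp [hv0]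
  have hc_nonneg : ∀ b, 0 ≤ c b := fun b => by
    rcases eq_or_ne b 0 with rfl | hb
    exacts [hc0.ge, (hc_pos b hb).le]
  refine ⟨fun b => ?_, fun b hb => ?_⟩
  · simpa [huA, hc0] using hc_nonneg b
  · obtain rfl : b = 0 := by
      by_contra hb0
      exact (hc_pos b hb0).ne' (by simpa [huA, hc0] using hb)
    exact le_rfl

theorem ImplementsProfileV.max_le_and_nonneg {x y : ℝ}
    (h10 : (1 : Fin (n + 1)) ≠ 0) (hr0 : r 0 = 0) (hc0 : c 0 = 0)
    (hc_pos : ∀ a : Fin (n + 1), a ≠ 0 → 0 < c a)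
    (hc1_min : ∀ a : Fin (n + 1), a ≠ 0 → c 1 ≤ c a) (hv0 : v 0 = 0)
    (hvinv_nonneg : ∀ u : ℝ, 0 ≤ u → 0 ≤ vinv u) (hvinv : ∀ u : ℝ, 0 ≤ u → v (vinv u) = u)
    (h : ImplementsProfileV v r c x y) : max (r 1 - vinv (c 1)) 0 ≤ x ∧ 0 ≤ y := by
  obtain ⟨k, -, I, t, a, hI, ⟨-, heq, hopt⟩, rfl, rfl⟩ := h
  have hc1 := (hc_pos 1 h10).le
  refine ⟨max_le ?_ ?_, (uAV_zero hc0).symm.trans_le (heq.1 0)⟩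
  · have hflat : ∀ b, uAV v c I (fun _ => vinv (c 1)) b ≤ uAV v c I (fun _ => vinv (c 1)) 1 := by
      intro b
      rw [hI.uAV_const, hI.uAV_const, if_neg h10, hvinv _ hc1]
      split_ifs with hb
      · simp [hb, hc0]
      · linarith [hc1_min b hb]
    obtain ⟨b, hb, hle⟩ := exists_isEquilibriumV_uP_le (r := r) 1 hflat
    rw [← hI.uP_const _ h10]
    exact hle.trans (hopt _ b (fun _ => hvinv_nonneg _ hc1) hb)
  · rw [← uP_zero (I := I) (t := fun _ => 0) hr0]
    exact hopt _ 0 (fun _ => le_rfl) (isEquilibriumV_zero_contract hc0 hc_pos hv0 hI)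

lemma IsEquilibriumV.cost_le_sum (hc0 : c 0 = 0) (h : IsEquilibriumV v r c I t a)
    (ha : a ≠ 0) : c a ≤ ∑ j, I a j * v (t j) := by
  have := h.1 0
  rw [uAV_zero hc0, uAV_of_ne_zero ha] at this
  linarith

lemma IsEquilibriumV.cost_eq_of_row_eq (hc1_min : ∀ a : Fin (n + 1), a ≠ 0 → c 1 ≤ c a)
    (h10 : (1 : Fin (n + 1)) ≠ 0) (h : IsEquilibriumV v r c I t a) (ha : a ≠ 0)
    (hrow : I a = I 1) : c a = c 1 := by
  have := h.1 1
  rw [uAV_of_ne_zero h10, uAV_of_ne_zero ha, hrow] at this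
  linarith [hc1_min a ha]

/-- Participation and Jensen's inequality force an expected transfer of at least `v⁻¹ (c a)`. -/
lemma IsEquilibriumV.uP_le_of_cost_eq (hc0 : c 0 = 0)
    (hr1_max : ∀ a : Fin (n + 1), a ≠ 0 → c a = c 1 → r a ≤ r 1)
    (hv_conc : ConcaveOn ℝ (Set.Ici 0) v) (hv_mono : StrictMonoOn v (Set.Ici 0))
    (hvinv_nonneg : ∀ u : ℝ, 0 ≤ u → 0 ≤ vinv u) (hvinv : ∀ u : ℝ, 0 ≤ u → v (vinv u) = u)
    (hc1 : 0 ≤ c 1) (hI : Stochastic I) (ht : ∀ j, 0 ≤ t j) (h : IsEquilibriumV v r c I t a)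
    (ha : a ≠ 0) (hca : c a = c 1) : uP r I t a ≤ r 1 - vinv (c 1) := by
  have hpay : vinv (c 1) ≤ expT I t a :=
    vinv_le_of_le_map hv_mono hvinv_nonneg hvinv hc1 (hI.expT_nonneg ht)
      (hca ▸ (h.cost_le_sum hc0 ha).trans (hI.sum_mul_map_le_map_expT hv_conc ht ha))
  rw [uP]
  linarith [hr1_max a ha hca]

def binaryInfo (p : Fin (n + 1) → ℝ) : Fin (n + 1) → Fin 2 → ℝ := fun b => ![p b, 1 - p b]

lemma sum_binaryInfo_mul (p : Fin (n + 1) → ℝ) (b : Fin (n + 1)) (g : Fin 2 → ℝ) :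
    ∑ j, binaryInfo p b j * g j = p b * g 0 + (1 - p b) * g 1 := by
  simp [binaryInfo, Fin.sum_univ_two]

lemma stochastic_binaryInfo {p : Fin (n + 1) → ℝ} (hp : ∀ b, 0 ≤ p b ∧ p b ≤ 1) :
    Stochastic (binaryInfo p) := by
  refine fun b _ => ⟨fun j => ?_, by simp [binaryInfo, Fin.sum_univ_two]⟩
  fin_cases j <;> simp [binaryInfo, (hp b).1, (hp b).2]

def screeningInfo (i : Fin (n + 1)) (q β : ℝ) : Fin (n + 1) → Fin 2 → ℝ :=
  binaryInfo fun b => if b = i then q else β * q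

section Screening

variable {i b : Fin (n + 1)} {q β s x y : ℝ}

lemma stochastic_screeningInfo (hq0 : 0 ≤ q) (hq1 : q ≤ 1) (hβ0 : 0 ≤ β) (hβ1 : β ≤ 1) :
    Stochastic (screeningInfo i q β) :=
  stochastic_binaryInfo fun b => by
    split_ifs
    · exact ⟨hq0, hq1⟩
    · exact ⟨mul_nonneg hβ0 hq0, mul_le_one₀ hβ1 hq0 hq1⟩

lemma sum_screeningInfo_mul (g : Fin 2 → ℝ) :
    ∑ j, screeningInfo i q β b j * g j =
      (if b = i then q else β * q) * g 0 + (1 - if b = i then q else β * q) * g 1 :=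
  sum_binaryInfo_mul _ b g

lemma screeningInfo_eq_one (hβ1 : i = 1 → β = 1) (hb : b ≠ i) :
    screeningInfo i q β b = screeningInfo i q β 1 := by
  by_cases h1 : (1 : Fin (n + 1)) = i
  · subst h1
    simp [screeningInfo, binaryInfo, hb, hβ1 rfl]
  · simp [screeningInfo, binaryInfo, hb, h1]

lemma uAV_screeningInfo (hv0 : v 0 = 0) (hb : b ≠ 0) :
    uAV v c (screeningInfo i q β) ![s, 0] b = (if b = i then q else β * q) * v s - c b := by
  rw [uAV_of_ne_zero hb, sum_screeningInfo_mul]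
  simp [hv0]

lemma expT_screeningInfo (hb : b ≠ 0) :
    expT (screeningInfo i q β) ![s, 0] b = (if b = i then q else β * q) * s := by
  rw [expT_of_ne_zero hb, sum_screeningInfo_mul]
  simp

/-- Paying the bonus `s` on the first signal, the agent gets `y` from action `i` and
`c 1 + y - c b` from any other action `b`; ties occur only at the cheapest cost. -/
lemma isEquilibriumV_screeningInfo (hr0 : r 0 = 0) (hc0 : c 0 = 0)
    (hc1_min : ∀ a : Fin (n + 1), a ≠ 0 → c 1 ≤ c a)
    (hr1_max : ∀ a : Fin (n + 1), a ≠ 0 → c a = c 1 → r a ≤ r 1) (hv0 : v 0 = 0)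
    (hi : i ≠ 0) (hx : 0 ≤ x) (hy : 0 ≤ y) (hq : q * v s = c i + y) (hqs : q * s = r i - x)
    (hβ : β * (c i + y) = c 1 + y) (hpool : r 1 - x ≤ β * (r i - x)) :
    IsEquilibriumV v r c (screeningInfo i q β) ![s, 0] i := by
  have hui : uAV v c (screeningInfo i q β) ![s, 0] i = y := by
    rw [uAV_screeningInfo hv0 hi, if_pos rfl, hq]; ring
  have hub : ∀ b, b ≠ 0 → b ≠ i → uAV v c (screeningInfo i q β) ![s, 0] b = c 1 + y - c b :=
    fun b hb hbi => by rw [uAV_screeningInfo hv0 hb, if_neg hbi, mul_assoc, hq, hβ]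
  have hpi : uP r (screeningInfo i q β) ![s, 0] i = x := by
    rw [uP, expT_screeningInfo hi, if_pos rfl, hqs]; ring
  refine ⟨fun b => ?_, fun b hb => ?_⟩
  · rw [hui]
    rcases eq_or_ne b 0 with rfl | hb0
    · rwa [uAV_zero hc0]
    rcases eq_or_ne b i with rfl | hbi
    · rw [hui]
    rw [hub b hb0 hbi]
    linarith [hc1_min b hb0]
  · rw [hpi]
    rcases eq_or_ne b 0 with rfl | hb0
    · rwa [uP_zero hr0]
    rcases eq_or_ne b i with rfl | hbi
    · rw [hpi]
    rw [hui, hub b hb0 hbi] at hb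
    have hcb : c b = c 1 := by linarith
    rw [uP, expT_screeningInfo hb0, if_neg hbi, mul_assoc, hqs]
    linarith [hr1_max b hb0 hcb]

/-- Incentive compatibility against action `1` forces any contract implementing `i` to pay at
least `s` on the first signal, hence at least `q * s` in expectation. -/
lemma IsEquilibriumV.uP_le_of_screeningInfo_self (hv_mono : StrictMonoOn v (Set.Ici 0))
    (hv_nonneg : ∀ z : ℝ, 0 ≤ z → 0 ≤ v z) {t : Fin 2 → ℝ} (ht : ∀ j, 0 ≤ t j)
    (h10 : (1 : Fin (n + 1)) ≠ 0) (hi : i ≠ 0) (h1i : 1 ≠ i) (hq0 : 0 < q) (hq1 : q ≤ 1)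
    (hβ1 : β < 1) (hs : 0 ≤ s) (hq : q * v s = c i + y) (hqs : q * s = r i - x)
    (hβ : β * (c i + y) = c 1 + y) (h : IsEquilibriumV v r c (screeningInfo i q β) t i) :
    uP r (screeningInfo i q β) t i ≤ x := by
  have hIC := h.1 1
  rw [uAV_of_ne_zero h10, uAV_of_ne_zero hi, sum_screeningInfo_mul, sum_screeningInfo_mul,
    if_neg h1i, if_pos rfl] at hIC
  have hgap : (1 - β) * (c i + y) ≤ (1 - β) * (q * (v (t 0) - v (t 1))) := by
    linear_combination hIC - hβ
  have hbonus : q * v s ≤ q * v (t 0) := by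
    rw [hq]
    nlinarith [le_of_mul_le_mul_left hgap (sub_pos.2 hβ1), hv_nonneg _ (ht 1)]
  have hst : s ≤ t 0 :=
    (hv_mono.le_iff_le hs (ht 0)).1 (le_of_mul_le_mul_left hbonus hq0)
  rw [uP, expT_of_ne_zero hi, sum_screeningInfo_mul, if_pos rfl]
  nlinarith [mul_nonneg (sub_nonneg.2 hq1) (ht 1)]

lemma IsEquilibriumV.uP_le_of_screeningInfo {t : Fin 2 → ℝ} (hr0 : r 0 = 0) (hc0 : c 0 = 0)
    (hc1_min : ∀ a : Fin (n + 1), a ≠ 0 → c 1 ≤ c a)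
    (hr1_max : ∀ a : Fin (n + 1), a ≠ 0 → c a = c 1 → r a ≤ r 1)
    (hv_conc : ConcaveOn ℝ (Set.Ici 0) v) (hv_mono : StrictMonoOn v (Set.Ici 0))
    (hv_nonneg : ∀ z : ℝ, 0 ≤ z → 0 ≤ v z)
    (hvinv_nonneg : ∀ u : ℝ, 0 ≤ u → 0 ≤ vinv u) (hvinv : ∀ u : ℝ, 0 ≤ u → v (vinv u) = u)
    (h10 : (1 : Fin (n + 1)) ≠ 0) (hc1 : 0 ≤ c 1) (hq0 : 0 < q) (hq1 : q ≤ 1) (hβ0 : 0 ≤ β)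
    (hβ1 : β ≤ 1) (hs : 0 ≤ s) (hx : 0 ≤ x) (hpooled : r 1 - vinv (c 1) ≤ x)
    (hK : 0 < c i + y) (hq : q * v s = c i + y) (hqs : q * s = r i - x)
    (hβ : β * (c i + y) = c 1 + y) (ht : ∀ j, 0 ≤ t j)
    (h : IsEquilibriumV v r c (screeningInfo i q β) t a) :
    uP r (screeningInfo i q β) t a ≤ x := by
  have hI := stochastic_screeningInfo (i := i) hq0.le hq1 hβ0 hβ1
  rcases eq_or_ne a 0 with rfl | ha
  · rwa [uP_zero hr0]
  by_cases hca : c a = c 1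
  · exact (h.uP_le_of_cost_eq hc0 hr1_max hv_conc hv_mono hvinv_nonneg hvinv hc1 hI ht ha
      hca).trans hpooled
  have hβ_one : i = 1 → β = 1 := by
    rintro rfl
    exact (mul_eq_right₀ hK.ne').1 hβ
  obtain rfl : a = i := by
    by_contra hai
    exact hca (h.cost_eq_of_row_eq hc1_min h10 ha (screeningInfo_eq_one hβ_one hai))
  have hβlt : β < 1 := by
    refine (mul_lt_iff_lt_one_left hK).1 ?_
    linarith [lt_of_le_of_ne (hc1_min a ha) (Ne.symm hca)]
  exact h.uP_le_of_screeningInfo_self hv_mono hv_nonneg ht h10 ha (fun h1a => hca (by rw [h1a]))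
    hq0 hq1 hβlt hs hq hqs hβ

end Screening

theorem implementsProfileV_of_le_map_sub {i : Fin (n + 1)} {x y : ℝ}
    (h10 : (1 : Fin (n + 1)) ≠ 0) (hr0 : r 0 = 0) (hc0 : c 0 = 0)
    (hc_pos : ∀ a : Fin (n + 1), a ≠ 0 → 0 < c a)
    (hc1_min : ∀ a : Fin (n + 1), a ≠ 0 → c 1 ≤ c a)
    (hr1_max : ∀ a : Fin (n + 1), a ≠ 0 → c a = c 1 → r a ≤ r 1)
    (hv_conc : ConcaveOn ℝ (Set.Ici 0) v) (hv_mono : StrictMonoOn v (Set.Ici 0))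
    (hv0 : v 0 = 0) (hv_nonneg : ∀ z : ℝ, 0 ≤ z → 0 ≤ v z)
    (hv_lim : Tendsto (fun z : ℝ => v z / z) atTop (nhds 0))
    (hvinv_nonneg : ∀ u : ℝ, 0 ≤ u → 0 ≤ vinv u) (hvinv : ∀ u : ℝ, 0 ≤ u → v (vinv u) = u)
    (hi : i ≠ 0) (hxi : x ≤ r i) (hyi : y ≤ v (r i - x) - c i) (hx : 0 ≤ x)
    (hpooled : r 1 - vinv (c 1) ≤ x) (hy : 0 ≤ y) : ImplementsProfileV v r c x y := by
  have hc1 := (hc_pos 1 h10).le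
  have hK : 0 < c i + y := by linarith [hc_pos i hi]
  have hT : 0 < r i - x := (sub_nonneg.2 hxi).lt_of_ne fun hT => by
    rw [← hT, hv0] at hyi
    linarith
  obtain ⟨q, s, hq0, hq1, hs, hqs, hq⟩ := exists_lottery hv_conc hv_lim hT hK (by linarith)
  set β := (c 1 + y) / (c i + y)
  have hβ : β * (c i + y) = c 1 + y := div_mul_cancel₀ _ hK.ne'
  have hβ0 : 0 ≤ β := by positivity
  have hβ1 : β ≤ 1 := (div_le_one hK).2 (by linarith [hc1_min i hi])
  have hpool : vinv (c 1) ≤ β * (r i - x) :=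
    vinv_le_of_le_map hv_mono hvinv_nonneg hvinv hc1 (by positivity) <| calc
      c 1 ≤ β * (c i + y) := by linarith
      _ ≤ β * v (r i - x) := by gcongr; linarith
      _ ≤ v (β * (r i - x)) := hv_conc.mul_map_le_map_mul hv0 hβ0 hβ1 hT.le
  have hpi : uP r (screeningInfo i q β) ![s, 0] i = x := by
    rw [uP, expT_screeningInfo hi, if_pos rfl, hqs]
    ring
  have hui : uAV v c (screeningInfo i q β) ![s, 0] i = y := by
    rw [uAV_screeningInfo hv0 hi, if_pos rfl, hq]
    ring
  refine ⟨2, two_pos, screeningInfo i q β, ![s, 0], i, stochastic_screeningInfo hq0.le hq1 hβ0 hβ1,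
    ⟨fun j => ?_, isEquilibriumV_screeningInfo hr0 hc0 hc1_min hr1_max hv0 hi hx hy hq hqs hβ
      (by linarith), fun t a ht h => hpi ▸ ?_⟩, hpi, hui⟩
  · fin_cases j <;> simp [hs]
  · exact h.uP_le_of_screeningInfo hr0 hc0 hc1_min hr1_max hv_conc hv_mono hv_nonneg hvinv_nonneg
      hvinv h10 hc1 hq0 hq1 hβ0 hβ1 hs hx hpooled hK hq hqs hβ ht

theorem implementsProfileV_zero_zero (h10 : (1 : Fin (n + 1)) ≠ 0)
    (hr0 : r 0 = 0) (hc0 : c 0 = 0) (hc_pos : ∀ a : Fin (n + 1), a ≠ 0 → 0 < c a)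
    (hc1_min : ∀ a : Fin (n + 1), a ≠ 0 → c 1 ≤ c a)
    (hr1_max : ∀ a : Fin (n + 1), a ≠ 0 → c a = c 1 → r a ≤ r 1)
    (hv_conc : ConcaveOn ℝ (Set.Ici 0) v) (hv_mono : StrictMonoOn v (Set.Ici 0))
    (hv0 : v 0 = 0) (hvinv_nonneg : ∀ u : ℝ, 0 ≤ u → 0 ≤ vinv u)
    (hvinv : ∀ u : ℝ, 0 ≤ u → v (vinv u) = u) (hpooled : r 1 - vinv (c 1) ≤ 0) :
    ImplementsProfileV v r c 0 0 := by
  have hI : Stochastic fun (_ : Fin (n + 1)) (_ : Fin 1) => (1 : ℝ) :=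
    fun _ _ => ⟨fun _ => zero_le_one, by simp⟩
  refine ⟨1, one_pos, _, fun _ => 0, 0, hI, ⟨fun _ => le_rfl,
    isEquilibriumV_zero_contract hc0 hc_pos hv0 hI, fun t a ht h => ?_⟩, uP_zero hr0,
    uAV_zero hc0⟩
  rw [uP_zero hr0]
  rcases eq_or_ne a 0 with rfl | ha
  · rw [uP_zero hr0]
  exact (h.uP_le_of_cost_eq hc0 hr1_max hv_conc hv_mono hvinv_nonneg hvinv (hc_pos 1 h10).le hI
    ht ha (h.cost_eq_of_row_eq hc1_min h10 ha rfl)).trans hpooled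

end

theorem implementable_profile_iff_risk_averse_general
    (n : ℕ) (hn : 1 ≤ n) (r c : Fin (n + 1) → ℝ)
    (hr0 : r 0 = 0) (hc0 : c 0 = 0)
    (hc_pos : ∀ a : Fin (n + 1), a ≠ 0 → 0 < c a)
    (hc1_min : ∀ a : Fin (n + 1), a ≠ 0 → c 1 ≤ c a)
    (hr1_max : ∀ a : Fin (n + 1), a ≠ 0 → c a = c 1 → r a ≤ r 1)
    (v : ℝ → ℝ)
    (hv_conc : ConcaveOn ℝ (Set.Ici 0) v)
    (hv_mono : StrictMonoOn v (Set.Ici 0))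
    (hv0 : v 0 = 0)
    (hv_nonneg : ∀ z : ℝ, 0 ≤ z → 0 ≤ v z)
    (hv_lim : Tendsto (fun z : ℝ => v z / z) atTop (nhds 0))
    (vinv : ℝ → ℝ)
    (hvinv_nonneg : ∀ u : ℝ, 0 ≤ u → 0 ≤ vinv u)
    (hvinv : ∀ u : ℝ, 0 ≤ u → v (vinv u) = u)
    (x y : ℝ)
    (hF : (∃ i : Fin (n + 1), i ≠ 0 ∧ x ≤ r i ∧ y ≤ v (r i - x) - c i) ∨
      (x = 0 ∧ y = 0)) :
    ImplementsProfileV v r c x y ↔ max (r 1 - vinv (c 1)) 0 ≤ x ∧ 0 ≤ y := by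
  have h10 : (1 : Fin (n + 1)) ≠ 0 := by
    rw [Ne, Fin.one_eq_zero_iff]
    omega
  refine ⟨ImplementsProfileV.max_le_and_nonneg h10 hr0 hc0 hc_pos hc1_min hv0 hvinv_nonneg hvinv,
    fun ⟨hx, hy⟩ => ?_⟩
  obtain ⟨hpooled, hx0⟩ := max_le_iff.1 hx
  rcases hF with ⟨i, hi, hxi, hyi⟩ | ⟨rfl, rfl⟩
  · exact implementsProfileV_of_le_map_sub h10 hr0 hc0 hc_pos hc1_min hr1_max hv_conc hv_mono hv0
      hv_nonneg hv_lim hvinv_nonneg hvinv hi hxi hyi hx0 hpooled hy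
  · exact implementsProfileV_zero_zero h10 hr0 hc0 hc_pos hc1_min hr1_max hv_conc hv_mono hv0
      hvinv_nonneg hvinv hpooled

/-- In the principal-agent model with a risk-averse agent under limited
liability, a utility profile $(x,y) \in F$ is implementable if and only if
$x \ge \max\{r_1 - v^{-1}(c_1), 0\}$ and $y \ge 0$. -/
theorem implementable_profile_iff_risk_averse
    (n : ℕ) (hn : 1 ≤ n) (r c : Fin (n + 1) → ℝ)
    (hr0 : r 0 = 0) (hc0 : c 0 = 0)
    (hr_nonneg : ∀ a, 0 ≤ r a)
    (hc_pos : ∀ a : Fin (n + 1), a ≠ 0 → 0 < c a)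
    (hc1_min : ∀ a : Fin (n + 1), a ≠ 0 → c 1 ≤ c a)
    (hr1_max : ∀ a : Fin (n + 1), a ≠ 0 → c a = c 1 → r a ≤ r 1)
    (v : ℝ → ℝ)
    (hv_conc : ConcaveOn ℝ (Set.Ici 0) v)
    (hv_mono : StrictMonoOn v (Set.Ici 0))
    (hv0 : v 0 = 0)
    (hv_nonneg : ∀ z : ℝ, 0 ≤ z → 0 ≤ v z)
    (hv_lim : Tendsto (fun z : ℝ => v z / z) atTop (nhds 0))
    (vinv : ℝ → ℝ)
    (hvinv_nonneg : ∀ u : ℝ, 0 ≤ u → 0 ≤ vinv u)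
    (hvinv : ∀ u : ℝ, 0 ≤ u → v (vinv u) = u)
    (x y : ℝ)
    (hF : (∃ i : Fin (n + 1), i ≠ 0 ∧ x ≤ r i ∧ y ≤ v (r i - x) - c i) ∨
      (x = 0 ∧ y = 0)) :
    ImplementsProfileV v r c x y ↔ max (r 1 - vinv (c 1)) 0 ≤ x ∧ 0 ≤ y :=
  implementable_profile_iff_risk_averse_general n hn r c hr0 hc0 hc_pos hc1_min hr1_max v hv_conc
    hv_mono hv0 hv_nonneg hv_lim vinv hvinv_nonneg hvinv x y hF
end
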